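/- No finite sample complexity without regularity: for every number of samples s, every ε ∈ (0,1), and every pricing rule p mapping s samples to a price, there exists a distribution F (a point mass of probability 1/M at M and mass 1-1/M at 0, for suitable M) such that the expected revenue of the data-driven price is less than (1-ε) times the monopoly revenue of F. In particular, letting M → ∞, no function of s samples guarantees a constant-factor approximation of the monopoly revenue over all distributions. -/

import Mathlib

open MeasureTheory Filter Topology

/-!
The value distribution with mass `1/M` at `M` and the rest at `0` has monopoly revenue `1`
(attained at the price `M`). With probability `(1 - 1/M)^s ≥ 1 - s/M` every sample is `0`, and
then the rule posts the fixed price `p 0`, which earns at most `p 0 / M`. Hence the expected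
revenue is at most `(s + p 0) / M`, which tends to `0` as `M → ∞`.
-/

noncomputable section

def twoPoint (M : ℝ) : Measure ℝ :=
  ENNReal.ofReal (1 - 1 / M) • Measure.dirac 0 + ENNReal.ofReal (1 / M) • Measure.dirac M

def monopolyRevenue (μ : Measure ℝ) : ℝ :=
  ⨆ q : ℝ, q * (μ {v | q ≤ v}).toReal

def expectedRevenue {s : ℕ} (p : (Fin s → ℝ) → ℝ) (μ : Measure ℝ) : ℝ :=
  ∫ v, p v * (μ {x | p v ≤ x}).toReal ∂(Measure.pi fun _ => μ)

end

theorem integral_le_add_measureReal_singleton_mul {α : Type*} [MeasurableSpace α]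
    [MeasurableSingletonClass α] (ν : Measure α) [IsProbabilityMeasure ν] {f : α → ℝ}
    (hf : 0 ≤ f) {a : α} {B b : ℝ} (hB : ∀ x, f x ≤ B) (ha : f a ≤ b) :
    ∫ x, f x ∂ν ≤ B + ν.real {a} * (b - B) := by
  have hind : Integrable (({a} : Set α).indicator fun _ => b - B) ν :=
    (integrable_const _).indicator (measurableSet_singleton a)
  calc ∫ x, f x ∂ν ≤ ∫ x, B + ({a} : Set α).indicator (fun _ => b - B) x ∂ν := by
        refine integral_mono_of_nonneg (.of_forall hf) ((integrable_const B).add hind)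
          (.of_forall fun x => ?_)
        by_cases hx : x = a
        · subst hx; simpa using ha
        · simpa [hx] using hB x
    _ = B + ν.real {a} * (b - B) := by
        rw [integral_add (integrable_const _) hind, integral_const,
          integral_indicator_const _ (measurableSet_singleton a)]
        simp

section OneDiv

variable {K : Type*} [Field K] [LinearOrder K] [IsStrictOrderedRing K] {M : K}

theorem one_div_le_one_of_one_le (hM : 1 ≤ M) : 1 / M ≤ 1 :=
  div_le_one_of_le₀ hM (zero_le_one.trans hM)

theorem one_sub_one_div_nonneg (hM : 1 ≤ M) : 0 ≤ 1 - 1 / M :=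
  sub_nonneg.2 (one_div_le_one_of_one_le hM)

end OneDiv

namespace twoPoint

variable {M : ℝ}

theorem isProbabilityMeasure (hM : 1 ≤ M) : IsProbabilityMeasure (twoPoint M) := by
  constructor
  simp only [twoPoint, Measure.coe_add, Measure.coe_smul, Pi.add_apply, Pi.smul_apply,
    smul_eq_mul, measure_univ, mul_one]
  rw [← ENNReal.ofReal_add (one_sub_one_div_nonneg hM) (by positivity)]
  simp

theorem tail_toReal (hM : 1 ≤ M) (q : ℝ) :
    (twoPoint M {x | q ≤ x}).toReal =
      (if q ≤ 0 then 1 - 1 / M else 0) + (if q ≤ M then 1 / M else 0) := by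
  have h₀ : 0 ≤ 1 - 1 / M := one_sub_one_div_nonneg hM
  have h₁ : 0 ≤ 1 / M := by positivity
  simp only [twoPoint, Measure.coe_add, Measure.coe_smul, Pi.add_apply, Pi.smul_apply,
    smul_eq_mul, Measure.dirac_apply, Set.indicator_apply, Set.mem_ofPred_eq, Pi.one_apply]
  split_ifs <;> simp only [mul_one, mul_zero, add_zero, zero_add, ENNReal.toReal_zero,
    ENNReal.toReal_add ENNReal.ofReal_ne_top ENNReal.ofReal_ne_top, ENNReal.toReal_ofReal h₀,
    ENNReal.toReal_ofReal h₁]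

theorem mul_tail_toReal_of_pos (hM : 1 ≤ M) {q : ℝ} (hq : 0 < q) :
    q * (twoPoint M {x | q ≤ x}).toReal = if q ≤ M then q / M else 0 := by
  rw [tail_toReal hM, if_neg hq.not_ge, zero_add]
  split_ifs <;> simp [div_eq_mul_inv]

theorem mul_tail_toReal_le_one (hM : 1 ≤ M) (q : ℝ) :
    q * (twoPoint M {x | q ≤ x}).toReal ≤ 1 := by
  rcases le_or_gt q 0 with hq | hq
  · exact (mul_nonpos_of_nonpos_of_nonneg hq ENNReal.toReal_nonneg).trans zero_le_one
  · rw [mul_tail_toReal_of_pos hM hq]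
    split_ifs with hqM
    · exact div_le_one_of_le₀ hqM (by linarith)
    · exact zero_le_one

theorem mul_tail_toReal_le_div (hM : 1 ≤ M) {q : ℝ} (hq : 0 ≤ q) :
    q * (twoPoint M {x | q ≤ x}).toReal ≤ q / M := by
  rcases hq.eq_or_lt with rfl | hq
  · simp
  · rw [mul_tail_toReal_of_pos hM hq]
    split_ifs
    · exact le_rfl
    · positivity

theorem monopolyRevenue_eq_one (hM : 1 ≤ M) : monopolyRevenue (twoPoint M) = 1 := by
  unfold monopolyRevenue
  refine le_antisymm (ciSup_le fun q => mul_tail_toReal_le_one hM q) ?_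
  calc (1 : ℝ) = M * (twoPoint M {x | M ≤ x}).toReal := by
        rw [mul_tail_toReal_of_pos hM (by linarith), if_pos le_rfl, div_self (by positivity)]
    _ ≤ _ := le_ciSup ⟨1, Set.forall_mem_range.2 fun q => mul_tail_toReal_le_one hM q⟩ M

theorem pi_measureReal_zero (hM : 1 ≤ M) (s : ℕ) :
    (Measure.pi fun _ : Fin s => twoPoint M).real {0} = (1 - 1 / M) ^ s := by
  have := isProbabilityMeasure hM
  have hzero : twoPoint M {0} = ENNReal.ofReal (1 - 1 / M) := by
    simp [twoPoint, (by linarith : M ≠ 0)]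
  rw [measureReal_def, ← Set.univ_pi_singleton, Measure.pi_pi]
  simp only [Pi.zero_apply, hzero, Finset.prod_const, Finset.card_univ, Fintype.card_fin,
    ENNReal.toReal_pow, ENNReal.toReal_ofReal (one_sub_one_div_nonneg hM)]

theorem one_sub_pow_le (hM : 1 ≤ M) (s : ℕ) : 1 - (1 - 1 / M) ^ s ≤ s / M := by
  have h := one_add_mul_le_pow (a := -(1 / M)) (by linarith [one_div_le_one_of_one_le hM]) s
  rw [← sub_eq_add_neg] at h
  linarith [show (s : ℝ) * -(1 / M) = -(s / M) by ring]

theorem expectedRevenue_le {s : ℕ} (hM : 1 ≤ M) (p : (Fin s → ℝ) → ℝ) (hpos : ∀ x, 0 ≤ p x) :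
    expectedRevenue p (twoPoint M) ≤ (s + p 0) / M := by
  have := isProbabilityMeasure hM
  have hpow_le_one : (1 - 1 / M) ^ s ≤ 1 :=
    pow_le_one₀ (one_sub_one_div_nonneg hM) (sub_le_self _ (by positivity))
  have hzero : (1 - 1 / M) ^ s * (p 0 / M) ≤ p 0 / M :=
    mul_le_of_le_one_left (div_nonneg (hpos 0) (by linarith)) hpow_le_one
  calc expectedRevenue p (twoPoint M)
      ≤ 1 + (Measure.pi fun _ => twoPoint M).real {0} * (p 0 / M - 1) :=
        integral_le_add_measureReal_singleton_mul _
          (fun v => mul_nonneg (hpos v) ENNReal.toReal_nonneg)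
          (fun v => mul_tail_toReal_le_one hM (p v)) (mul_tail_toReal_le_div hM (hpos 0))
    _ = (1 - (1 - 1 / M) ^ s) + (1 - 1 / M) ^ s * (p 0 / M) := by
        rw [pi_measureReal_zero hM]; ring
    _ ≤ (s + p 0) / M := by rw [add_div]; linarith [one_sub_pow_le hM s]

end twoPoint

theorem no_finite_sample_complexity_irregular_general
    (s : ℕ) (ε : ℝ) (hε : ε ∈ Set.Ioo (0 : ℝ) 1)
    (p : (Fin s → ℝ) → ℝ) (hpos : ∀ x, 0 ≤ p x) :
    ∃ M : ℝ, 1 ≤ M ∧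
      (∀ μ : Measure ℝ,
        μ = ENNReal.ofReal (1 - 1 / M) • Measure.dirac 0 +
            ENNReal.ofReal (1 / M) • Measure.dirac M →
        ((⨆ q : ℝ, q * (μ {v | q ≤ v}).toReal) = 1 ∧
         (∫ v : Fin s → ℝ, p v * (μ {x | p v ≤ x}).toReal
            ∂(Measure.pi fun _ => μ)) < (1 - ε) * 1)) := by
  have hvanish : Tendsto (fun M : ℝ => (s + p 0) / M) atTop (𝓝 0) :=
    tendsto_const_nhds.div_atTop tendsto_id
  obtain ⟨M, hsmall, hM⟩ :=
    ((hvanish.eventually (gt_mem_nhds (sub_pos.2 hε.2))).and (eventually_ge_atTop 1)).exists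
  refine ⟨M, hM, ?_⟩
  rintro μ rfl
  refine ⟨twoPoint.monopolyRevenue_eq_one hM, ?_⟩
  rw [mul_one]
  exact (twoPoint.expectedRevenue_le hM p hpos).trans_lt hsmall

/-- No finite sample complexity without regularity: for every number of
samples `s`, every `ε ∈ (0,1)`, and every (measurable, nonnegative) pricing
rule `p` mapping `s` samples to a price, there is a distribution — a point
mass of probability `1/M` at `M` and mass `1-1/M` at `0`, for suitable
`M ≥ 1`, whose monopoly revenue equals `1` — on which the expected revenue of
the data-driven price is less than `(1-ε)` times the monopoly revenue. -/
theorem no_finite_sample_complexity_irregular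
    (s : ℕ) (ε : ℝ) (hε : ε ∈ Set.Ioo (0 : ℝ) 1)
    (p : (Fin s → ℝ) → ℝ) (hmeas : Measurable p) (hpos : ∀ x, 0 ≤ p x) :
    ∃ M : ℝ, 1 ≤ M ∧
      (∀ μ : Measure ℝ,
        μ = ENNReal.ofReal (1 - 1 / M) • Measure.dirac 0 +
            ENNReal.ofReal (1 / M) • Measure.dirac M →
        ((⨆ q : ℝ, q * (μ {v | q ≤ v}).toReal) = 1 ∧
         (∫ v : Fin s → ℝ, p v * (μ {x | p v ≤ x}).toReal
            ∂(Measure.pi fun _ => μ)) < (1 - ε) * 1)) :=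
  no_finite_sample_complexity_irregular_general s ε hε p hpos
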